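/- For any attributed graph G, any finite set ℛ of rules, and any set M ⊆ ℳ(ℛ,G) of matchings, M is regular if and only if every subset of M is regular. -/
import Mathlib


namespace AGT

noncomputable section
open scoped Classical

/-- A many-sorted signature. -/
structure Signature where
  Sorts : Type
  Ops : Type
  arity : Ops → List Sorts
  res : Ops → Sorts

/-- A Σ-algebra whose carriers are sets of items of a fixed universe `U`. -/
structure Alg (σ : Signature) (U : Type) where
  sortCarrier : σ.Sorts → Set U
  op : σ.Ops → List U → U

variable {σ : Signature} {U : Type}

/-- The carrier `|𝒜|` of an algebra: the union of its sort carriers. -/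
def Alg.carrier (A : Alg σ U) : Set U := ⋃ s, A.sortCarrier s

/-- Well-formedness of an algebra: operations are well-typed and the carrier is
the *disjoint* union of the sort carriers. -/
def Alg.WF (A : Alg σ U) : Prop :=
  (∀ (o : σ.Ops) (args : List U),
      List.Forall₂ (fun a s => a ∈ A.sortCarrier s) args (σ.arity o) →
      A.op o args ∈ A.sortCarrier (σ.res o)) ∧
  ∀ s s' : σ.Sorts, s ≠ s' → A.sortCarrier s ∩ A.sortCarrier s' = ∅

/-- `h` is a Σ-homomorphism from `A` to `B`. -/
def IsHom (A B : Alg σ U) (h : U → U) : Prop :=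
  (∀ s : σ.Sorts, ∀ a ∈ A.sortCarrier s, h a ∈ B.sortCarrier s) ∧
  ∀ (o : σ.Ops) (args : List U),
    List.Forall₂ (fun a s => a ∈ A.sortCarrier s) args (σ.arity o) →
    h (A.op o args) = B.op o (args.map h)

/-- Elements generated in `A` from the set `S`. -/
inductive GenBy (A : Alg σ U) (S : Set U) : U → Prop
  | base (x : U) : x ∈ S → GenBy A S x
  | app (o : σ.Ops) (args : List U) :
      (∀ a ∈ args, GenBy A S a) →
      List.Forall₂ (fun a s => a ∈ A.sortCarrier s) args (σ.arity o) →
      GenBy A S (A.op o args)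

/-- `A` is (isomorphic to) the term algebra `T_Σ(X)` over the variables `X`:
it is generated by `X` and freely so (universal property, with uniqueness). -/
def IsFree (A : Alg σ U) (X : Set U) : Prop :=
  X ⊆ A.carrier ∧
  (∀ t ∈ A.carrier, GenBy A X t) ∧
  ∀ (B : Alg σ U) (f : U → U),
    (∀ s : σ.Sorts, ∀ x ∈ X ∩ A.sortCarrier s, f x ∈ B.sortCarrier s) →
    ∃ h : U → U, IsHom A B h ∧ (∀ x ∈ X, h x = f x) ∧
      ∀ h' : U → U, IsHom A B h' → (∀ x ∈ X, h' x = f x) →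
        ∀ t ∈ A.carrier, h' t = h t

/-- An attributed graph over the signature `σ` and the universe `U` of items.
`src`/`tgt` are total functions on `U`; only their values on `Arr` matter, and
`attr` is the attribution (only its values on `V ∪ Arr` matter). -/
structure Graph (σ : Signature) (U : Type) where
  V : Set U
  Arr : Set U
  src : U → U
  tgt : U → U
  alg : Alg σ U
  attr : U → Set U

/-- The carrier `|G| = V_G ∪ A_G ∪ |𝒜_G|` of a graph. -/
def Graph.carrier (G : Graph σ U) : Set U := G.V ∪ G.Arr ∪ G.alg.carrier

/-- Well-formedness of an attributed graph. -/
def Graph.WF (G : Graph σ U) : Prop :=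
  (∀ a ∈ G.Arr, G.src a ∈ G.V ∧ G.tgt a ∈ G.V) ∧
  G.V ∩ G.Arr = ∅ ∧
  (G.V ∪ G.Arr) ∩ G.alg.carrier = ∅ ∧
  G.alg.WF ∧
  (∀ x : U, G.attr x ⊆ G.alg.carrier) ∧
  ∀ x : U, x ∉ G.V ∪ G.Arr → G.attr x = ∅

/-- A finite graph: finitely many vertices and arrows, finite attribute sets. -/
def Graph.IsFinite (G : Graph σ U) : Prop :=
  G.V.Finite ∧ G.Arr.Finite ∧ ∀ x : U, (G.attr x).Finite

/-- An unlabeled graph: `ℓ_G(x) = ∅` for all items. -/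
def Graph.Unlabeled (G : Graph σ U) : Prop :=
  ∀ x ∈ G.V ∪ G.Arr, G.attr x = ∅

/-- `H ⊴ G` : `H` is a subgraph of `G`. -/
def Subgraph (H G : Graph σ U) : Prop :=
  H.V ⊆ G.V ∧ H.Arr ⊆ G.Arr ∧
  (∀ a ∈ H.Arr, H.src a = G.src a ∧ H.tgt a = G.tgt a) ∧
  H.alg = G.alg ∧
  ∀ x ∈ H.V ∪ H.Arr, H.attr x ⊆ G.attr x

/-- `H` and `G` are joinable graphs. -/
def Joinable (H G : Graph σ U) : Prop :=
  H.alg = G.alg ∧ H.V ∩ G.Arr = ∅ ∧ H.Arr ∩ G.V = ∅ ∧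
  ∀ a ∈ H.Arr ∩ G.Arr, H.src a = G.src a ∧ H.tgt a = G.tgt a

/-- The meet `H ⊓ G` of (joinable) graphs. -/
def gmeet (H G : Graph σ U) : Graph σ U where
  V := H.V ∩ G.V
  Arr := H.Arr ∩ G.Arr
  src := H.src
  tgt := H.tgt
  alg := H.alg
  attr := fun x => H.attr x ∩ G.attr x

/-- The join `H ⊔ G` of (joinable) graphs. -/
def gjoin (H G : Graph σ U) : Graph σ U where
  V := H.V ∪ G.V
  Arr := H.Arr ∪ G.Arr
  src := fun a => if a ∈ H.Arr then H.src a else G.src a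
  tgt := fun a => if a ∈ H.Arr then H.tgt a else G.tgt a
  alg := H.alg
  attr := fun x => H.attr x ∪ G.attr x

/-- The join `⊔_{i ∈ S} F i` of a family of (pairwise joinable) graphs;
the algebra is taken from the ambient graph `G`. -/
def bigJoin {ι : Type} (G : Graph σ U) (F : ι → Graph σ U) (S : Set ι) : Graph σ U where
  V := ⋃ i ∈ S, (F i).V
  Arr := ⋃ i ∈ S, (F i).Arr
  src := fun a => if h : ∃ i, i ∈ S ∧ a ∈ (F i).Arr then (F h.choose).src a else a
  tgt := fun a => if h : ∃ i, i ∈ S ∧ a ∈ (F i).Arr then (F h.choose).tgt a else a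
  alg := G.alg
  attr := fun x => ⋃ i ∈ S, (F i).attr x

/-- `H` is disjoint from the sets `V`, `A` and the attribution `l`. -/
def DisjFrom (H : Graph σ U) (V A : Set U) (l : U → Set U) : Prop :=
  H.V ∩ V = ∅ ∧ H.Arr ∩ A = ∅ ∧ ∀ x ∈ H.V ∪ H.Arr, H.attr x ∩ l x = ∅

/-- The union of a family `S` of subgraphs of `G`. -/
def subUnion (G : Graph σ U) (S : Set (Graph σ U)) : Graph σ U where
  V := ⋃ H ∈ S, H.V
  Arr := ⋃ H ∈ S, H.Arr
  src := G.src
  tgt := G.tgt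
  alg := G.alg
  attr := fun x => ⋃ H ∈ S, H.attr x

/-- `G ∖ V,A,l` : the largest subgraph of `G` disjoint from `V`, `A`, `l`,
i.e. the union of all subgraphs of `G` disjoint from `V`, `A`, `l`. -/
def Graph.del (G : Graph σ U) (V A : Set U) (l : U → Set U) : Graph σ U :=
  subUnion G {H | H.WF ∧ Subgraph H G ∧ DisjFrom H V A l}

/-- The image `f(H)` of a graph `H` under an (item-injective) map `f`,
taken inside the algebra `A`. -/
def Graph.img (H : Graph σ U) (f : U → U) (A : Alg σ U) : Graph σ U where
  V := f '' H.V
  Arr := f '' H.Arr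
  src := fun a => if h : ∃ x, x ∈ H.Arr ∧ f x = a then f (H.src h.choose) else a
  tgt := fun a => if h : ∃ x, x ∈ H.Arr ∧ f x = a then f (H.tgt h.choose) else a
  alg := A
  attr := fun y => if h : ∃ x, x ∈ H.V ∪ H.Arr ∧ f x = y then f '' H.attr h.choose else ∅

/-- `α` is a morphism of attributed graphs from `H` to `G`. -/
def IsMorphism (H G : Graph σ U) (α : U → U) : Prop :=
  (∀ v ∈ H.V, α v ∈ G.V) ∧ (∀ a ∈ H.Arr, α a ∈ G.Arr) ∧
  (∀ a ∈ H.Arr, G.src (α a) = α (H.src a) ∧ G.tgt (α a) = α (H.tgt a)) ∧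
  IsHom H.alg G.alg α ∧
  ∀ x ∈ H.V ∪ H.Arr, α '' H.attr x ⊆ G.attr (α x)

/-- A matching: a morphism injective on vertices and arrows. -/
def IsMatchingMap (H G : Graph σ U) (α : U → U) : Prop :=
  IsMorphism H G α ∧ Set.InjOn α (H.V ∪ H.Arr)

/-- `α` is an isomorphism from `H` to `G` (a morphism with an inverse morphism). -/
def IsIso (H G : Graph σ U) (α : U → U) : Prop :=
  IsMorphism H G α ∧ ∃ β : U → U, IsMorphism G H β ∧
    (∀ x ∈ H.carrier, β (α x) = x) ∧ ∀ x ∈ G.carrier, α (β x) = x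

/-- `H ≅ G`. -/
def GIso (H G : Graph σ U) : Prop := ∃ α : U → U, IsIso H G α

/-- A rule `⟨L,K,R⟩` over the set of variables `X`. -/
structure Rule (σ : Signature) (U : Type) where
  L : Graph σ U
  K : Graph σ U
  R : Graph σ U
  X : Set U

/-- Well-formedness of a rule: `L`, `K`, `R` are finite `(Σ,X)`-graphs over the
term algebra `T_Σ(X)`, `L` and `R` are joinable, `L ⊓ R ⊴ K ⊴ L`, and `Var(L) = X`
(every variable of `X` occurs in some attribute of `L`). -/
def Rule.WF (r : Rule σ U) : Prop :=
  r.L.WF ∧ r.K.WF ∧ r.R.WF ∧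
  r.L.IsFinite ∧ r.K.IsFinite ∧ r.R.IsFinite ∧
  Joinable r.L r.R ∧
  Subgraph (gmeet r.L r.R) r.K ∧ Subgraph r.K r.L ∧
  IsFree r.L.alg r.X ∧
  ∀ x ∈ r.X, ∃ i ∈ r.L.V ∪ r.L.Arr, ∃ t ∈ r.L.attr i,
    ¬ GenBy r.L.alg (r.X \ {x}) t

/-- An unlabeled rule. -/
def Rule.Unlabeled (r : Rule σ U) : Prop :=
  r.L.Unlabeled ∧ r.K.Unlabeled ∧ r.R.Unlabeled

/-- A well-formed finite set of rules, with pairwise distinct left-hand side carriers. -/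
def RuleSetWF (ℛ : Set (Rule σ U)) : Prop :=
  ℛ.Finite ∧ (∀ r ∈ ℛ, r.WF) ∧
  ∀ r ∈ ℛ, ∀ r' ∈ ℛ, r ≠ r' → r.L.carrier ≠ r'.L.carrier

/-- A (candidate) matching `μ` of a rule in a graph: the rule together with the
underlying function. -/
structure Match (σ : Signature) (U : Type) where
  rule : Rule σ U
  m : U → U

/-- `μ ∈ ℳ(ℛ,G)` : `μ` is a consistent matching of some rule of `ℛ` in `G`. -/
def Match.WF (μ : Match σ U) (G : Graph σ U) (ℛ : Set (Rule σ U)) : Prop :=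
  μ.rule ∈ ℛ ∧ IsMatchingMap μ.rule.L G μ.m ∧
  ∀ x ∈ μ.rule.K.V ∪ μ.rule.K.Arr,
    (μ.m '' (μ.rule.L.attr x \ μ.rule.K.attr x)) ∩ (μ.m '' (μ.rule.K.attr x)) = ∅

/-- The set `ℳ(ℛ,G)` of all matchings of rules of `ℛ` in `G`. -/
def AllMatches (G : Graph σ U) (ℛ : Set (Rule σ U)) : Set (Match σ U) :=
  {μ : Match σ U | μ.WF G ℛ}

/-- The matching `μ*` : agrees with `μ` on `K_μ` (and on attributes) and sends each
vertex or arrow of `R_μ` outside `K_μ` to the fresh item `fr x μ` (standing for `⟨x,μ⟩`). -/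
def Match.star (fr : U → Match σ U → U) (μ : Match σ U) : U → U :=
  fun x => if x ∈ (μ.rule.R.V ∪ μ.rule.R.Arr) \ (μ.rule.K.V ∪ μ.rule.K.Arr)
    then fr x μ else μ.m x

/-- The fresh-item generator `fr x μ` (standing for the pair `⟨x,μ⟩`) is injective
and produces items outside of `G`. -/
def FreshWF (G : Graph σ U) (fr : U → Match σ U → U) : Prop :=
  (∀ (x : U) (μ : Match σ U), fr x μ ∉ G.carrier) ∧
  ∀ (x : U) (μ : Match σ U) (y : U) (ν : Match σ U),
    fr x μ = fr y ν → x = y ∧ μ = ν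

/-- The graph `G^μ_R = μ*(R_μ)`. -/
def RImg (G : Graph σ U) (fr : U → Match σ U → U) (μ : Match σ U) : Graph σ U :=
  μ.rule.R.img (Match.star fr μ) G.alg

/-- The image graph `μ(L_μ)`. -/
def mImgL (G : Graph σ U) (μ : Match σ U) : Graph σ U := μ.rule.L.img μ.m G.alg

/-- The image graph `μ(K_μ)`. -/
def mImgK (G : Graph σ U) (μ : Match σ U) : Graph σ U := μ.rule.K.img μ.m G.alg

/-- `V^M = ⋃_{μ∈M} μ(V_{L_μ} ∖ V_{K_μ})`. -/
def Vdel (M : Set (Match σ U)) : Set U :=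
  ⋃ μ ∈ M, μ.m '' (μ.rule.L.V \ μ.rule.K.V)

/-- `A^M = ⋃_{μ∈M} μ(A_{L_μ} ∖ A_{K_μ})`. -/
def Adel (M : Set (Match σ U)) : Set U :=
  ⋃ μ ∈ M, μ.m '' (μ.rule.L.Arr \ μ.rule.K.Arr)

/-- `ℓ^M = ⋃_{μ∈M} ℓ_μ ∘ (ℓ_{L_μ} ∖ ℓ_{K_μ}) ∘ μ⁻¹`. -/
def ldel (M : Set (Match σ U)) : U → Set U := fun x =>
  ⋃ μ ∈ M, ⋃ y ∈ {y | (y ∈ μ.rule.L.V ∪ μ.rule.L.Arr) ∧ μ.m y = x},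
    μ.m '' (μ.rule.L.attr y \ μ.rule.K.attr y)

/-- `ℓ_M = ⋃_{μ∈M} ℓ_μ ∘ (ℓ_{R_μ} ∖ ℓ_{K_μ}) ∘ μ⁻¹`. -/
def ladd (M : Set (Match σ U)) : U → Set U := fun x =>
  ⋃ μ ∈ M, ⋃ y ∈ {y | (y ∈ μ.rule.L.V ∪ μ.rule.L.Arr) ∧ μ.m y = x},
    μ.m '' (μ.rule.R.attr y \ μ.rule.K.attr y)

/-- The parallel transformation `G^M = (G ∖ V^M,A^M,ℓ^M) ⊔ ⊔_{μ∈M} G^μ_R`. -/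
def PT (G : Graph σ U) (fr : U → Match σ U → U) (M : Set (Match σ U)) : Graph σ U :=
  gjoin (G.del (Vdel M) (Adel M) (ldel M)) (bigJoin G (RImg G fr) M)

/-- `M` is regular: `G^M` is disjoint from `V^M`, `A^M`, `ℓ^M`. -/
def Regular (G : Graph σ U) (fr : U → Match σ U → U) (M : Set (Match σ U)) : Prop :=
  DisjFrom (PT G fr M) (Vdel M) (Adel M) (ldel M)

/-- `M` has the effective deletion property: `G^M` is disjoint from
`V^M`, `A^M`, `ℓ^M ∖ ℓ_M`. -/
def EDP (G : Graph σ U) (fr : U → Match σ U → U) (M : Set (Match σ U)) : Prop :=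
  DisjFrom (PT G fr M) (Vdel M) (Adel M) (fun x => ldel M x \ ladd M x)

/-- `M` is parallel coherent: `ν(R_ν ⊓ K_ν) ⊓ μ(L_μ) ⊴ μ(K_μ)` for all `μ,ν ∈ M`. -/
def ParCoherent (G : Graph σ U) (M : Set (Match σ U)) : Prop :=
  ∀ μ ∈ M, ∀ ν ∈ M,
    Subgraph (gmeet ((gmeet ν.rule.R ν.rule.K).img ν.m G.alg) (mImgL G μ)) (mImgK G μ)

/-- `M` is parallel independent:
`(ν(L_ν) ⊔ ν*(R_ν)) ⊓ μ(L_μ) ⊴ μ(K_μ) ⊔ μ*(R_μ)` for all `μ ≠ ν` in `M`. -/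
def ParIndep (G : Graph σ U) (fr : U → Match σ U → U) (M : Set (Match σ U)) : Prop :=
  ∀ μ ∈ M, ∀ ν ∈ M, μ ≠ ν →
    Subgraph (gmeet (gjoin (mImgL G ν) (RImg G fr ν)) (mImgL G μ))
      (gjoin (mImgK G μ) (RImg G fr μ))

/-- `M` is sequential independent: for all `N ⊆ M` and `μ ∈ M ∖ N`,
`μ(L_μ) ⊴ G^N` (so `μ` becomes, via the canonical injection `j`, a matching `j∘μ` in
`G^N`), and there is an isomorphism `α` from `G^{N∪{μ}}` to `(G^N)^{j∘μ}` that is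
the identity on `G`. -/
def SeqIndep (G : Graph σ U) (fr : U → Match σ U → U) (M : Set (Match σ U)) : Prop :=
  ∀ N ⊆ M, ∀ μ ∈ M, μ ∉ N →
    Subgraph (mImgL G μ) (PT G fr N) ∧
    ∃ α : U → U, IsIso (PT G fr (N ∪ {μ})) (PT (PT G fr N) fr {μ}) α ∧
      ∀ x ∈ G.carrier, α x = x

/-- One step of sequential rewriting `G ⇒_ℛ H`. -/
def SeqStep (ℛ : Set (Rule σ U)) (fr : U → Match σ U → U) (G H : Graph σ U) : Prop :=
  ∃ μ : Match σ U, μ.WF G ℛ ∧ GIso H (PT G fr {μ})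

/-- Finitely many steps of sequential rewriting `G ⇒*_ℛ H`. -/
def SeqRew (ℛ : Set (Rule σ U)) (fr : U → Match σ U → U) :
    Graph σ U → Graph σ U → Prop :=
  Relation.ReflTransGen (SeqStep ℛ fr)

/-- Parallel rewriting `G ⇛_ℛ H`. -/
def ParRew (ℛ : Set (Rule σ U)) (fr : U → Match σ U → U) (G H : Graph σ U) : Prop :=
  ∃ M : Set (Match σ U), M ⊆ AllMatches G ℛ ∧ EDP G fr M ∧ GIso H (PT G fr M)

/-- Full parallel rewriting `G ⤇_ℛ H` (with `M = ℳ(ℛ,G)`). -/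
def FullParRew (ℛ : Set (Rule σ U)) (fr : U → Match σ U → U) (G H : Graph σ U) : Prop :=
  EDP G fr (AllMatches G ℛ) ∧ GIso H (PT G fr (AllMatches G ℛ))

end

/-- Corollary 1: `M` is regular iff all its subsets are regular. -/
theorem regular_iff_subsets (U : Type) (σ : Signature) (G : Graph σ U) (hG : G.WF)
    (ℛ : Set (Rule σ U)) (hℛ : RuleSetWF ℛ)
    (fr : U → Match σ U → U) (hfr : FreshWF G fr)
    (M : Set (Match σ U)) (hM : M ⊆ AllMatches G ℛ) :
    Regular G fr M ↔ ∀ N ⊆ M, Regular G fr N := by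
  constructor
  · intro hreg N hNM
    obtain ⟨hV, hA, hl⟩ := hreg
    have hVmono : Vdel N ⊆ Vdel M := Set.biUnion_subset_biUnion_left hNM
    have hAmono : Adel N ⊆ Adel M := Set.biUnion_subset_biUnion_left hNM
    have hlmono : ∀ x, ldel N x ⊆ ldel M x := fun x =>
      Set.biUnion_subset_biUnion_left hNM
    -- membership in the bigJoin over N gives membership in PT over M
    have hRV : ∀ x, x ∈ (bigJoin G (RImg G fr) N).V → x ∈ (PT G fr M).V := by
      intro x hx
      simp only [bigJoin, Set.mem_iUnion] at hx
      obtain ⟨μ, hμ, hxμ⟩ := hx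
      exact Or.inr (Set.mem_iUnion₂.mpr ⟨μ, hNM hμ, hxμ⟩)
    have hRA : ∀ x, x ∈ (bigJoin G (RImg G fr) N).Arr → x ∈ (PT G fr M).Arr := by
      intro x hx
      simp only [bigJoin, Set.mem_iUnion] at hx
      obtain ⟨μ, hμ, hxμ⟩ := hx
      exact Or.inr (Set.mem_iUnion₂.mpr ⟨μ, hNM hμ, hxμ⟩)
    refine ⟨?_, ?_, ?_⟩
    · rw [Set.eq_empty_iff_forall_notMem]
      rintro x ⟨hx, hxV⟩
      rcases hx with hx | hx
      · simp only [Graph.del, subUnion, Set.mem_iUnion] at hx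
        obtain ⟨H, ⟨hHwf, hHsub, hHdisj⟩, hxH⟩ := hx
        have : x ∈ H.V ∩ Vdel N := ⟨hxH, hxV⟩
        rw [hHdisj.1] at this
        exact this
      · have : x ∈ (PT G fr M).V ∩ Vdel M := ⟨hRV x hx, hVmono hxV⟩
        rw [hV] at this
        exact this
    · rw [Set.eq_empty_iff_forall_notMem]
      rintro x ⟨hx, hxA⟩
      rcases hx with hx | hx
      · simp only [Graph.del, subUnion, Set.mem_iUnion] at hx
        obtain ⟨H, ⟨hHwf, hHsub, hHdisj⟩, hxH⟩ := hx
        have : x ∈ H.Arr ∩ Adel N := ⟨hxH, hxA⟩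
        rw [hHdisj.2.1] at this
        exact this
      · have : x ∈ (PT G fr M).Arr ∩ Adel M := ⟨hRA x hx, hAmono hxA⟩
        rw [hA] at this
        exact this
    · intro x hxmem
      rw [Set.eq_empty_iff_forall_notMem]
      rintro t ⟨ht, htl⟩
      rcases ht with ht | ht
      · -- t comes from the deleted part
        simp only [Graph.del, subUnion, Set.mem_iUnion] at ht
        obtain ⟨H, ⟨hHwf, hHsub, hHdisj⟩, htH⟩ := ht
        by_cases hxH : x ∈ H.V ∪ H.Arr
        · have : t ∈ H.attr x ∩ ldel N x := ⟨htH, htl⟩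
          rw [hHdisj.2.2 x hxH] at this
          exact this
        · rw [hHwf.2.2.2.2.2 x hxH] at htH
          exact htH
      · -- t comes from some RImg μ with μ ∈ N
        simp only [bigJoin, Set.mem_iUnion] at ht
        obtain ⟨μ, hμ, htμ⟩ := ht
        -- the attribution of an image graph is nonempty only on its items
        have hximg : x ∈ (RImg G fr μ).V ∪ (RImg G fr μ).Arr := by
          simp only [RImg, Graph.img] at htμ ⊢
          split at htμ
          · rename_i h
            have hc := h.choose_spec
            rcases hc.1 with hv | ha
            · exact Or.inl ⟨h.choose, hv, hc.2⟩
            · exact Or.inr ⟨h.choose, ha, hc.2⟩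
          · exact absurd htμ (Set.notMem_empty t)
        have hxPT : x ∈ (PT G fr M).V ∪ (PT G fr M).Arr := by
          rcases hximg with h | h
          · exact Or.inl (hRV x (Set.mem_iUnion₂.mpr ⟨μ, hμ, h⟩))
          · exact Or.inr (hRA x (Set.mem_iUnion₂.mpr ⟨μ, hμ, h⟩))
        have htPT : t ∈ (PT G fr M).attr x :=
          Or.inr (Set.mem_iUnion₂.mpr ⟨μ, hNM hμ, htμ⟩)
        have : t ∈ (PT G fr M).attr x ∩ ldel M x := ⟨htPT, hlmono x htl⟩
        rw [hl x hxPT] at this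
        exact this
  · intro h
    exact h M subset_rfl

end AGT
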